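/- If A, B ∈ ℝ^{p×q} satisfy A B⊤ = 0 and A⊤ B = 0 (equivalently, the column space of A is orthogonal to the column space of B and the row space of A is orthogonal to the row space of B), then ‖A + B‖_* = ‖A‖_* + ‖B‖_*. -/

import Mathlib

/-!
Writing `√` for the positive semidefinite square root, `‖A‖_* = tr √(AᵀA)`. Orthogonality gives
`(A + B)ᵀ(A + B) = AᵀA + BᵀB` with `AᵀA · BᵀB = 0`, and positive semidefinite matrices that
annihilate each other have square roots that still annihilate each other, so
`√(M + N) = √M + √N` for `M = AᵀA`, `N = BᵀB`. Taking traces gives the claim.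
-/

open Matrix

/-- The nuclear norm of a real matrix: the sum of its singular values
(square roots of the eigenvalues of `Aᵀ * A`). -/
noncomputable def nuclearNorm {p m : Type*} [Fintype p] [Fintype m] [DecidableEq m]
    (A : Matrix p m ℝ) : ℝ :=
  ∑ i, Real.sqrt ((show (Aᵀ * A).IsHermitian by
    simpa [Matrix.conjTranspose_eq_transpose_of_trivial] using
      Matrix.isHermitian_conjTranspose_mul_self A).eigenvalues i)

open scoped MatrixOrder ComplexOrder

namespace Matrix

variable {𝕜 n : Type*} [RCLike 𝕜] [Fintype n] [DecidableEq n]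

theorem PosSemidef.trace_cfcSqrt {A : Matrix n n 𝕜} (hA : A.PosSemidef) :
    (CFC.sqrt A).trace = ∑ i, (√(hA.1.eigenvalues i) : 𝕜) := by
  rw [CFC.sqrt_eq_cfc, cfc_nnreal_eq_real _ A, hA.1.cfc_eq, IsHermitian.cfc,
    Unitary.conjStarAlgAut_apply, trace_mul_cycle, Unitary.coe_star_mul_self, one_mul,
    trace_diagonal]
  simp [hA.eigenvalues_nonneg]

-- `(√A X)ᴴ (√A X) = Xᴴ A X = 0`.
theorem PosSemidef.cfcSqrt_mul_eq_zero {A X : Matrix n n 𝕜} (hA : A.PosSemidef)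
    (h : A * X = 0) : CFC.sqrt A * X = 0 := by
  have hs : (CFC.sqrt A)ᴴ = CFC.sqrt A := (CFC.sqrt_nonneg A).posSemidef.1
  rw [← conjTranspose_mul_self_eq_zero, conjTranspose_mul, hs, mul_assoc, ← mul_assoc _ _ X,
    CFC.sqrt_mul_sqrt_self A hA.nonneg, h, mul_zero]

theorem PosSemidef.mul_cfcSqrt_eq_zero {A X : Matrix n n 𝕜} (hA : A.PosSemidef)
    (h : X * A = 0) : X * CFC.sqrt A = 0 := by
  have hs : (CFC.sqrt A)ᴴ = CFC.sqrt A := (CFC.sqrt_nonneg A).posSemidef.1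
  rw [← conjTranspose_eq_zero, conjTranspose_mul, hs]
  refine hA.cfcSqrt_mul_eq_zero ?_
  rw [← hA.1.eq, ← conjTranspose_mul, h, conjTranspose_zero]

theorem PosSemidef.cfcSqrt_mul_cfcSqrt_eq_zero {A B : Matrix n n 𝕜} (hA : A.PosSemidef)
    (hB : B.PosSemidef) (h : A * B = 0) : CFC.sqrt A * CFC.sqrt B = 0 :=
  hA.cfcSqrt_mul_eq_zero (hB.mul_cfcSqrt_eq_zero h)

theorem PosSemidef.cfcSqrt_add_of_mul_eq_zero {A B : Matrix n n 𝕜} (hA : A.PosSemidef)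
    (hB : B.PosSemidef) (h : A * B = 0) : CFC.sqrt (A + B) = CFC.sqrt A + CFC.sqrt B := by
  have hBA : B * A = 0 := by
    rw [← hA.1.eq, ← hB.1.eq, ← conjTranspose_mul, h, conjTranspose_zero]
  refine CFC.sqrt_unique ?_ (add_nonneg (CFC.sqrt_nonneg A) (CFC.sqrt_nonneg B))
  rw [add_mul, mul_add, mul_add, hA.cfcSqrt_mul_cfcSqrt_eq_zero hB h,
    hB.cfcSqrt_mul_cfcSqrt_eq_zero hA hBA, CFC.sqrt_mul_sqrt_self A hA.nonneg,
    CFC.sqrt_mul_sqrt_self B hB.nonneg, add_zero, zero_add]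

theorem posSemidef_transpose_mul_self {p m : Type*} [Fintype p] [Finite m]
    (A : Matrix p m ℝ) : (Aᵀ * A).PosSemidef :=
  posSemidef_conjTranspose_mul_self A

end Matrix

theorem nuclearNorm_eq_trace_cfcSqrt {p m : Type*} [Fintype p] [Fintype m] [DecidableEq m]
    (A : Matrix p m ℝ) : nuclearNorm A = (CFC.sqrt (Aᵀ * A)).trace := by
  rw [(posSemidef_transpose_mul_self A).trace_cfcSqrt]
  rfl

/-- **Additivity of the nuclear norm for doubly orthogonal matrices.**
If `A, B ∈ ℝ^{p×q}` satisfy `A Bᵀ = 0` and `Aᵀ B = 0` (the column space of `A` is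
orthogonal to the column space of `B` and the row space of `A` is orthogonal to the
row space of `B`), then `‖A + B‖_* = ‖A‖_* + ‖B‖_*`. -/
theorem nuclearNorm_add_of_orthogonal
    {p q : ℕ} (A B : Matrix (Fin p) (Fin q) ℝ)
    (h₁ : A * Bᵀ = 0) (h₂ : Aᵀ * B = 0) :
    nuclearNorm (A + B) = nuclearNorm A + nuclearNorm B := by
  have hGram : (A + B)ᵀ * (A + B) = Aᵀ * A + Bᵀ * B := by
    have h₂' : Bᵀ * A = 0 := by rw [← transpose_transpose A, ← transpose_mul, h₂, transpose_zero]
    rw [transpose_add, Matrix.add_mul, Matrix.mul_add, Matrix.mul_add, h₂, h₂', add_zero,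
      zero_add]
  have hGram_mul : (Aᵀ * A) * (Bᵀ * B) = 0 := by
    rw [Matrix.mul_assoc, ← Matrix.mul_assoc A, h₁, Matrix.zero_mul, Matrix.mul_zero]
  rw [nuclearNorm_eq_trace_cfcSqrt, nuclearNorm_eq_trace_cfcSqrt, nuclearNorm_eq_trace_cfcSqrt,
    hGram, (posSemidef_transpose_mul_self A).cfcSqrt_add_of_mul_eq_zero
      (posSemidef_transpose_mul_self B) hGram_mul, trace_add]
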